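/- Fix integers n ≥ 1 and k ≥ 1. If f is a smooth function on ℝ × ℝ^{n+1} satisfying Xf = −((n−2k+4)/2)·f pointwise, then Δ̃^k(Q·f) = Q·Δ̃^k f identically. (Consequently Δ̃^k is tangential on homogeneous functions of degree −(n−2k)/2: changing such a function by Q times a function homogeneous of degree −(n−2k)/2 − 2 changes Δ̃^k of it only by a multiple of Q, so its restriction to the cone {Q = 0} is unchanged. This yields the GJMS operators L_{2k} on the round sphere.) -/

import Mathlib

/-!
Leibniz' rule for `Δ̃`, together with `Δ̃Q = -2(n+2)` and
`2(∂_t Q ∂_t f - Σᵢ ∂ᵢQ ∂ᵢf) = -4Xf`, gives `Δ̃(Qf) = QΔ̃f - 4Xf - 2(n+2)f`.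
Symmetry of second derivatives gives `[∂_v, X] = ∂_v`, hence `[X, Δ̃] = -2Δ̃`: `Δ̃` lowers the
weight of a homogeneous function by `2`. For `f` of weight `w` an induction then yields
`Δ̃^{m+1}(Qf) = QΔ̃^{m+1}f - (m+1)(4w + 2n + 4 - 4m) Δ̃^m f`,
and for `m = k - 1` the coefficient vanishes exactly when `w = -(n - 2k + 4)/2`.
-/

/-- The flat Fefferman–Graham ambient space `ℝ × ℝ^{n+1}` of the standard conformal
`n`-sphere, with coordinates `(t, x⁰, …, xⁿ)`. -/
abbrev Amb (n : ℕ) : Type := ℝ × (Fin (n+1) → ℝ)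

/-- The partial derivative `∂_t`. -/
noncomputable def ptD {n : ℕ} (f : Amb n → ℝ) (p : Amb n) : ℝ :=
  fderiv ℝ f p (1, 0)

/-- The partial derivative `∂_{xⁱ}`. -/
noncomputable def pxD {n : ℕ} (i : Fin (n+1)) (f : Amb n → ℝ) (p : Amb n) : ℝ :=
  fderiv ℝ f p (0, Pi.single i 1)

/-- The flat ambient Laplacian `Δ̃f = ∂_t²f − Σᵢ ∂_{xⁱ}²f` (convention `Δ ≥ 0` for the
metric `g̃ = −dt² + Σᵢ (dxⁱ)²`). -/
noncomputable def LapA {n : ℕ} (f : Amb n → ℝ) : Amb n → ℝ :=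
  fun p => ptD (fun q => ptD f q) p - ∑ i, pxD i (fun q => pxD i f q) p

/-- The Euler (dilation) operator `Xf = t∂_t f + Σᵢ xⁱ∂_{xⁱ} f`. -/
noncomputable def EulerA {n : ℕ} (f : Amb n → ℝ) (p : Amb n) : ℝ :=
  p.1 * ptD f p + ∑ i, p.2 i * pxD i f p

/-- The function `Q(t,x) = |x|² − t²`. -/
def QA {n : ℕ} (p : Amb n) : ℝ := (∑ i, (p.2 i)^2) - p.1^2

/-- The half-space `{(t,x) : t > 0}`. -/
def HS (n : ℕ) : Set (Amb n) := {p | 0 < p.1}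

open scoped ContDiff

section DirectionalDerivative

variable {E : Type*} [NormedAddCommGroup E] [NormedSpace ℝ E]

noncomputable def dirDeriv (v : E) (f : E → ℝ) (p : E) : ℝ := fderiv ℝ f p v

noncomputable def radialDeriv (f : E → ℝ) (p : E) : ℝ := fderiv ℝ f p p

variable {f g : E → ℝ} {p : E}

theorem ContDiff.dirDeriv (hf : ContDiff ℝ ∞ f) (v : E) : ContDiff ℝ ∞ (dirDeriv v f) :=
  (hf.fderiv_right le_rfl).clm_apply contDiff_const

theorem ContDiff.radialDeriv (hf : ContDiff ℝ ∞ f) : ContDiff ℝ ∞ (radialDeriv f) :=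
  (hf.fderiv_right le_rfl).clm_apply contDiff_id

theorem ContDiff.differentiable_fderiv (hf : ContDiff ℝ ∞ f) : Differentiable ℝ (fderiv ℝ f) :=
  (hf.fderiv_right (m := ∞) le_rfl).differentiable (by simp)

theorem dirDeriv_add (hf : DifferentiableAt ℝ f p) (hg : DifferentiableAt ℝ g p) (v : E) :
    dirDeriv v (fun q => f q + g q) p = dirDeriv v f p + dirDeriv v g p := by
  simp [dirDeriv, fderiv_fun_add hf hg]

theorem dirDeriv_sub (hf : DifferentiableAt ℝ f p) (hg : DifferentiableAt ℝ g p) (v : E) :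
    dirDeriv v (fun q => f q - g q) p = dirDeriv v f p - dirDeriv v g p := by
  simp [dirDeriv, fderiv_fun_sub hf hg]

theorem dirDeriv_const_mul (hf : DifferentiableAt ℝ f p) (c : ℝ) (v : E) :
    dirDeriv v (fun q => c * f q) p = c * dirDeriv v f p := by
  simp [dirDeriv, fderiv_const_mul hf c]

theorem dirDeriv_mul (hf : DifferentiableAt ℝ f p) (hg : DifferentiableAt ℝ g p) (v : E) :
    dirDeriv v (fun q => f q * g q) p = dirDeriv v f p * g p + f p * dirDeriv v g p := by
  simp [dirDeriv, fderiv_fun_mul hf hg, mul_comm, add_comm]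

theorem dirDeriv_sum {ι : Type*} {s : Finset ι} {F : ι → E → ℝ}
    (hF : ∀ i ∈ s, DifferentiableAt ℝ (F i) p) (v : E) :
    dirDeriv v (fun q => ∑ i ∈ s, F i q) p = ∑ i ∈ s, dirDeriv v (F i) p := by
  simp [dirDeriv, fderiv_fun_sum hF]

theorem dirDeriv_clm (L : E →L[ℝ] ℝ) (v : E) : dirDeriv v L p = L v := by
  rw [dirDeriv, L.fderiv]

theorem dirDeriv_dirDeriv_mul (hf : ContDiff ℝ ∞ f) (hg : ContDiff ℝ ∞ g) (v : E) :
    dirDeriv v (dirDeriv v (fun q => f q * g q)) p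
      = dirDeriv v (dirDeriv v f) p * g p + 2 * (dirDeriv v f p * dirDeriv v g p)
        + f p * dirDeriv v (dirDeriv v g) p := by
  have hdiff : ∀ {h : E → ℝ}, ContDiff ℝ ∞ h → ∀ q, DifferentiableAt ℝ h q :=
    fun hh q => hh.differentiable (by simp) q
  have hfirst : dirDeriv v (fun q => f q * g q)
      = fun q => dirDeriv v f q * g q + f q * dirDeriv v g q :=
    funext fun q => dirDeriv_mul (hdiff hf q) (hdiff hg q) v
  rw [hfirst, dirDeriv_add ((hdiff ((hf.dirDeriv v).mul hg) p)) (hdiff (hf.mul (hg.dirDeriv v)) p),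
    dirDeriv_mul (hdiff (hf.dirDeriv v) p) (hdiff hg p),
    dirDeriv_mul (hdiff hf p) (hdiff (hg.dirDeriv v) p)]
  ring

theorem dirDeriv_dirDeriv_eq_fderiv_fderiv (hf : ContDiff ℝ ∞ f) (v w : E) :
    dirDeriv w (dirDeriv v f) p = fderiv ℝ (fderiv ℝ f) p w v := by
  rw [dirDeriv, show dirDeriv v f = fun q => fderiv ℝ f q v from rfl,
    fderiv_clm_apply (hf.differentiable_fderiv p) (differentiableAt_const v)]
  simp

theorem dirDeriv_radialDeriv (hf : ContDiff ℝ ∞ f) (v : E) :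
    dirDeriv v (radialDeriv f) p = radialDeriv (dirDeriv v f) p + dirDeriv v f p := by
  rw [dirDeriv, show radialDeriv f = fun q => fderiv ℝ f q q from rfl,
    fderiv_clm_apply (hf.differentiable_fderiv p) differentiableAt_fun_id, radialDeriv, ← dirDeriv,
    dirDeriv_dirDeriv_eq_fderiv_fderiv hf, (hf.contDiffAt.isSymmSndFDerivAt
      (by simp [minSmoothness_of_isRCLikeNormedField]; decide)) p v]
  simp [dirDeriv, add_comm]

theorem dirDeriv_dirDeriv_radialDeriv (hf : ContDiff ℝ ∞ f) (v : E) :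
    dirDeriv v (dirDeriv v (radialDeriv f)) p
      = radialDeriv (dirDeriv v (dirDeriv v f)) p + 2 * dirDeriv v (dirDeriv v f) p := by
  have hf' := hf.dirDeriv v
  rw [funext fun q => dirDeriv_radialDeriv hf v (p := q),
    dirDeriv_add (hf'.radialDeriv.differentiable (by simp) p) (hf'.differentiable (by simp) p),
    dirDeriv_radialDeriv hf']
  ring

end DirectionalDerivative

section AmbientSpace

variable {n : ℕ} {f g : Amb n → ℝ}

def timeVec : Amb n := (1, 0)

def spaceVec (i : Fin (n+1)) : Amb n := (0, Pi.single i 1)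

theorem lapA_apply (f : Amb n → ℝ) (p : Amb n) :
    LapA f p = dirDeriv timeVec (dirDeriv timeVec f) p
      - ∑ i, dirDeriv (spaceVec i) (dirDeriv (spaceVec i) f) p := rfl

theorem eulerA_apply (f : Amb n → ℝ) (p : Amb n) :
    EulerA f p = p.1 * dirDeriv timeVec f p + ∑ i, p.2 i * dirDeriv (spaceVec i) f p := rfl

theorem eulerA_eq_radialDeriv (f : Amb n → ℝ) : EulerA f = radialDeriv f := by
  funext p
  have hp : p = p.1 • timeVec + ∑ i, p.2 i • spaceVec i := by
    refine Prod.ext (by simp [timeVec, spaceVec, Prod.fst_sum]) (funext fun j => ?_)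
    simp [timeVec, spaceVec, Prod.snd_sum, Finset.sum_apply, Pi.single_apply]
  rw [radialDeriv, congrArg (fderiv ℝ f p) hp]
  simp [eulerA_apply, dirDeriv]

theorem ContDiff.lapA (hf : ContDiff ℝ ∞ f) : ContDiff ℝ ∞ (LapA f) :=
  ((hf.dirDeriv _).dirDeriv _).sub (ContDiff.sum fun _ _ => (hf.dirDeriv _).dirDeriv _)

theorem lapA_sub (hf : ContDiff ℝ ∞ f) (hg : ContDiff ℝ ∞ g) (p : Amb n) :
    LapA (fun q => f q - g q) p = LapA f p - LapA g p := by
  have hdd : ∀ v, dirDeriv v (dirDeriv v (fun q => f q - g q)) p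
      = dirDeriv v (dirDeriv v f) p - dirDeriv v (dirDeriv v g) p := fun v => by
    rw [funext fun q => dirDeriv_sub (hf.differentiable (by simp) q)
      (hg.differentiable (by simp) q) v]
    exact dirDeriv_sub ((hf.dirDeriv v).differentiable (by simp) p)
      ((hg.dirDeriv v).differentiable (by simp) p) v
  simp only [lapA_apply, hdd, Finset.sum_sub_distrib]
  ring

theorem lapA_const_mul (hf : ContDiff ℝ ∞ f) (c : ℝ) (p : Amb n) :
    LapA (fun q => c * f q) p = c * LapA f p := by
  have hdd : ∀ v, dirDeriv v (dirDeriv v (fun q => c * f q)) p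
      = c * dirDeriv v (dirDeriv v f) p := fun v => by
    rw [funext fun q => dirDeriv_const_mul (hf.differentiable (by simp) q) c v]
    exact dirDeriv_const_mul ((hf.dirDeriv v).differentiable (by simp) p) c v
  simp only [lapA_apply, hdd, ← Finset.mul_sum]
  ring

theorem lapA_mul (hf : ContDiff ℝ ∞ f) (hg : ContDiff ℝ ∞ g) (p : Amb n) :
    LapA (fun q => f q * g q) p = LapA f p * g p
      + 2 * (dirDeriv timeVec f p * dirDeriv timeVec g p
        - ∑ i, dirDeriv (spaceVec i) f p * dirDeriv (spaceVec i) g p)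
      + f p * LapA g p := by
  simp only [lapA_apply, dirDeriv_dirDeriv_mul hf hg]
  rw [Finset.sum_add_distrib, Finset.sum_add_distrib, ← Finset.sum_mul, ← Finset.mul_sum,
    ← Finset.mul_sum]
  ring

theorem contDiff_QA : ContDiff ℝ ∞ (QA : Amb n → ℝ) := by
  unfold QA; fun_prop

def timeCoord : Amb n →L[ℝ] ℝ := ContinuousLinearMap.fst ℝ ℝ _

def spaceCoord (i : Fin (n+1)) : Amb n →L[ℝ] ℝ :=
  (ContinuousLinearMap.proj i).comp (ContinuousLinearMap.snd ℝ ℝ _)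

@[simp] theorem timeCoord_apply (p : Amb n) : timeCoord p = p.1 := rfl

@[simp] theorem spaceCoord_apply (i : Fin (n+1)) (p : Amb n) : spaceCoord i p = p.2 i := rfl

theorem dirDeriv_QA (v p : Amb n) :
    dirDeriv v QA p = 2 * (∑ i, p.2 i * v.2 i - p.1 * v.1) := by
  have hQ : (QA : Amb n → ℝ)
      = fun q => ∑ i, spaceCoord i q * spaceCoord i q - timeCoord q * timeCoord q := by
    funext q; simp [QA, sq]
  rw [hQ, dirDeriv_sub (by fun_prop) (by fun_prop), dirDeriv_sum (fun _ _ => by fun_prop),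
    dirDeriv_mul (by fun_prop) (by fun_prop)]
  simp only [dirDeriv_mul (spaceCoord _).differentiableAt (spaceCoord _).differentiableAt,
    dirDeriv_clm]
  simp [mul_comm, ← two_mul, ← Finset.mul_sum, mul_sub]

theorem dirDeriv_dirDeriv_QA (w v p : Amb n) :
    dirDeriv w (dirDeriv v QA) p = 2 * (∑ i, w.2 i * v.2 i - w.1 * v.1) := by
  have hlin : dirDeriv v QA
      = ⇑((2 : ℝ) • (∑ i, v.2 i • spaceCoord i - v.1 • timeCoord) : Amb n →L[ℝ] ℝ) := by
    funext q; simp [dirDeriv_QA, mul_comm]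
  rw [hlin, dirDeriv_clm]
  simp [mul_comm]

theorem dirDeriv_timeVec_QA (p : Amb n) : dirDeriv timeVec QA p = -(2 * p.1) := by
  simp [dirDeriv_QA, timeVec]

theorem dirDeriv_spaceVec_QA (i : Fin (n+1)) (p : Amb n) :
    dirDeriv (spaceVec i) QA p = 2 * p.2 i := by
  simp [dirDeriv_QA, spaceVec, Pi.single_apply]

theorem lapA_QA (p : Amb n) : LapA QA p = -(2 * n + 4) := by
  simp [lapA_apply, dirDeriv_dirDeriv_QA, timeVec, spaceVec, Pi.single_apply]
  ring

theorem lapA_QA_mul (hf : ContDiff ℝ ∞ f) (p : Amb n) :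
    LapA (fun q => QA q * f q) p = QA p * LapA f p - 4 * EulerA f p - (2 * n + 4) * f p := by
  rw [lapA_mul contDiff_QA hf, lapA_QA, eulerA_apply, dirDeriv_timeVec_QA]
  simp only [dirDeriv_spaceVec_QA, mul_assoc, ← Finset.mul_sum]
  ring

theorem eulerA_lapA (hf : ContDiff ℝ ∞ f) (p : Amb n) :
    EulerA (LapA f) p = LapA (EulerA f) p - 2 * LapA f p := by
  have hrad : radialDeriv (LapA f) p = radialDeriv (dirDeriv timeVec (dirDeriv timeVec f)) p
      - ∑ i, radialDeriv (dirDeriv (spaceVec i) (dirDeriv (spaceVec i) f)) p :=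
    (dirDeriv_sub (((hf.dirDeriv _).dirDeriv _).differentiable (by simp) p)
      ((ContDiff.sum fun _ _ => (hf.dirDeriv _).dirDeriv _).differentiable (by simp) p) p).trans
      (by rw [dirDeriv_sum fun _ _ => ((hf.dirDeriv _).dirDeriv _).differentiable (by simp) p]; rfl)
  rw [eulerA_eq_radialDeriv, eulerA_eq_radialDeriv, hrad, lapA_apply, lapA_apply]
  simp only [dirDeriv_dirDeriv_radialDeriv hf, Finset.sum_add_distrib, ← Finset.mul_sum]
  ring

def IsEulerHomogeneous (w : ℝ) (f : Amb n → ℝ) : Prop := ∀ p, EulerA f p = w * f p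

theorem ContDiff.iterate_lapA (hf : ContDiff ℝ ∞ f) (m : ℕ) : ContDiff ℝ ∞ (LapA^[m] f) := by
  induction m with
  | zero => exact hf
  | succ m ih => rw [Function.iterate_succ_apply']; exact ih.lapA

theorem IsEulerHomogeneous.lapA {w : ℝ} (hf : ContDiff ℝ ∞ f) (h : IsEulerHomogeneous w f) :
    IsEulerHomogeneous (w - 2) (LapA f) := fun p => by
  rw [eulerA_lapA hf, show EulerA f = fun q => w * f q from funext h, lapA_const_mul hf]
  ring

theorem IsEulerHomogeneous.iterate_lapA {w : ℝ} (hf : ContDiff ℝ ∞ f)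
    (h : IsEulerHomogeneous w f) (m : ℕ) : IsEulerHomogeneous (w - 2 * m) (LapA^[m] f) := by
  induction m with
  | zero => simpa using h
  | succ m ih =>
    rw [Function.iterate_succ_apply']
    convert ih.lapA (hf.iterate_lapA m) using 1
    push_cast; ring

theorem iterate_lapA_QA_mul {w : ℝ} (hf : ContDiff ℝ ∞ f) (h : IsEulerHomogeneous w f)
    (m : ℕ) (p : Amb n) :
    LapA^[m + 1] (fun q => QA q * f q) p
      = QA p * LapA^[m + 1] f p - (m + 1) * (4 * w + 2 * n + 4 - 4 * m) * LapA^[m] f p := by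
  induction m generalizing p with
  | zero =>
    simp only [zero_add, Function.iterate_one, Function.iterate_zero, id_eq]
    rw [lapA_QA_mul hf, h p]
    push_cast; ring
  | succ m ih =>
    rw [Function.iterate_succ_apply' _ (m + 1), funext ih,
      lapA_sub (contDiff_QA.mul (hf.iterate_lapA _)) (contDiff_const.mul (hf.iterate_lapA _)),
      lapA_const_mul (hf.iterate_lapA _), lapA_QA_mul (hf.iterate_lapA _),
      h.iterate_lapA hf (m + 1) p, ← Function.iterate_succ_apply' LapA m,
      ← Function.iterate_succ_apply' LapA (m + 1)]
    push_cast; ring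

end AmbientSpace

theorem stmt_8_general (n k : ℕ)
    (f : Amb n → ℝ) (hf : ContDiff ℝ (⊤ : ℕ∞) f)
    (hhom : ∀ p : Amb n, EulerA f p = -(((n:ℝ) - 2*(k:ℝ) + 4)/2) * f p) (p : Amb n) :
    LapA^[k] (fun q => QA q * f q) p = QA p * LapA^[k] f p := by
  rcases k with _ | m
  · rfl
  · rw [iterate_lapA_QA_mul hf hhom m p]
    push_cast; ring

/-- Example 3.1, tangentiality of `Δ̃^k`: if `f` is smooth on
`ℝ × ℝ^{n+1}` with `Xf = −((n−2k+4)/2)·f` pointwise, then `Δ̃^k(Q·f) = Q·Δ̃^k f`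
identically. -/
theorem stmt_8 (n k : ℕ) (hn : 1 ≤ n) (hk : 1 ≤ k)
    (f : Amb n → ℝ) (hf : ContDiff ℝ (⊤ : ℕ∞) f)
    (hhom : ∀ p : Amb n, EulerA f p = -(((n:ℝ) - 2*(k:ℝ) + 4)/2) * f p) (p : Amb n) :
    LapA^[k] (fun q => QA q * f q) p = QA p * LapA^[k] f p :=
  stmt_8_general n k f hf hhom p
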